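/- arXiv:1803.08487 — 2 statements merged into one kernel-verified Lean document; each statement's English description precedes it below -/
import Mathlib

section
/- Let r ≥ 2 be an integer and let c_1, …, c_r be rational numbers with 0 < c_i < 1 for every i. Then there exists a positive integer m such that ∑_{i=1}^r ⌊m·c_i⌋ < ⌊m·∑_{i=1}^r c_i⌋. -/
lemma aux_floor_lt {r : ℕ} (c : Fin r → ℚ) (m : ℕ)
    (h : 1 ≤ ∑ i, Int.fract ((m : ℚ) * c i)) :
    ∑ i, ⌊(m : ℚ) * c i⌋ < ⌊(m : ℚ) * ∑ i, c i⌋ := by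
  have key : (m : ℚ) * ∑ i, c i
      = ((∑ i, ⌊(m : ℚ) * c i⌋ : ℤ) : ℚ) + ∑ i, Int.fract ((m : ℚ) * c i) := by
    push_cast
    rw [Finset.mul_sum, ← Finset.sum_add_distrib]
    exact Finset.sum_congr rfl fun i _ => (Int.floor_add_fract _).symm
  rw [key, Int.floor_intCast_add]
  have : 1 ≤ ⌊∑ i, Int.fract ((m : ℚ) * c i)⌋ := Int.le_floor.2 (by exact_mod_cast h)
  omega

/-- For `r ≥ 2` rationals `c i` with `0 < c i < 1`, there is a positive
integer `m` with `∑ i, ⌊m * c i⌋ < ⌊m * ∑ i, c i⌋`. -/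
theorem sum_floor_lt_floor_sum_of_two_le
    (r : ℕ) (hr : 2 ≤ r) (c : Fin r → ℚ)
    (hc : ∀ i, 0 < c i ∧ c i < 1) :
    ∃ m : ℕ, 0 < m ∧
      ∑ i, ⌊(m : ℚ) * c i⌋ < ⌊(m : ℚ) * ∑ i, c i⌋ := by
  set i0 : Fin r := ⟨0, by omega⟩
  set i1 : Fin r := ⟨1, by omega⟩
  have hne : i0 ≠ i1 := by simp [i0, i1, Fin.ext_iff]
  have hfrac : ∀ (m : ℕ) i, 0 < m → Int.fract ((m : ℚ) * c i) ≥ 0 := fun m i _ =>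
    Int.fract_nonneg _
  -- general: for any m, sum of fracts ≥ frac at i0 + frac at i1
  have hsub : ∀ m : ℕ, Int.fract ((m : ℚ) * c i0) + Int.fract ((m : ℚ) * c i1)
      ≤ ∑ i, Int.fract ((m : ℚ) * c i) := by
    intro m
    have := Finset.sum_le_sum_of_subset_of_nonneg
      (s := ({i0, i1} : Finset (Fin r))) (t := Finset.univ)
      (f := fun i => Int.fract ((m : ℚ) * c i))
      (Finset.subset_univ _) (fun i _ _ => Int.fract_nonneg _)
    rwa [Finset.sum_pair hne] at this
  by_cases hsum : 1 ≤ c i0 + c i1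
  · refine ⟨1, one_pos, aux_floor_lt c 1 ?_⟩
    refine le_trans ?_ (hsub 1)
    have h0 := hc i0; have h1 := hc i1
    rw [Nat.cast_one, one_mul, one_mul,
      Int.fract_eq_self.2 ⟨le_of_lt h0.1, h0.2⟩,
      Int.fract_eq_self.2 ⟨le_of_lt h1.1, h1.2⟩]
    exact hsum
  · set N : ℕ := (c i0).den * (c i1).den with hN
    have hden0 : (c i0).den ≠ 1 := by
      intro h
      have heq := (Rat.den_eq_one_iff _).1 h
      have h0 := hc i0
      rw [← heq] at h0
      have h1 : (0 : ℤ) < (c i0).num := by exact_mod_cast h0.1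
      have h2 : (c i0).num < 1 := by exact_mod_cast h0.2
      omega
    have hN2 : 2 ≤ N := by
      have := (c i0).pos
      have := (c i1).pos
      calc 2 ≤ (c i0).den := by omega
      _ ≤ N := Nat.le_mul_of_pos_right _ (c i1).pos
    refine ⟨N - 1, by omega, aux_floor_lt c (N - 1) ?_⟩
    refine le_trans ?_ (hsub (N - 1))
    have hint : ∀ i, ((c i).den ∣ N) → ∃ k : ℤ, ((N : ℚ)) * c i = k := by
      intro i hdvd
      obtain ⟨t, ht⟩ := hdvd
      refine ⟨t * (c i).num, ?_⟩
      rw [ht]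
      push_cast
      have hd : ((c i).den : ℚ) * c i = (c i).num := by
        rw [mul_comm, eq_comm,
          ← div_eq_iff (by exact_mod_cast (c i).den_nz : ((c i).den : ℚ) ≠ 0)]
        exact (c i).num_div_den
      rw [mul_comm ((c i).den : ℚ) (t : ℚ), mul_assoc, hd]
    have hfr : ∀ i, ((c i).den ∣ N) →
        Int.fract (((N - 1 : ℕ) : ℚ) * c i) = 1 - c i := by
      intro i hdvd
      obtain ⟨k, hk⟩ := hint i hdvd
      have h0 := hc i
      have hcast : ((N - 1 : ℕ) : ℚ) = (N : ℚ) - 1 := by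
        rw [Nat.cast_sub (by omega : 1 ≤ N)]; norm_num
      have : ((N - 1 : ℕ) : ℚ) * c i = -(c i) + (k : ℚ) := by
        rw [hcast]; linarith [hk]
      rw [this]
      rw [show (-(c i) + (k:ℚ)) = -(c i) + (k:ℤ) by norm_num, Int.fract_add_intCast,
        Int.fract_neg, Int.fract_eq_self.2 ⟨le_of_lt h0.1, h0.2⟩]
      rw [Int.fract_eq_self.2 ⟨le_of_lt h0.1, h0.2⟩]
      linarith
    rw [hfr i0 ⟨(c i1).den, rfl⟩, hfr i1 ⟨(c i0).den, by rw [hN, mul_comm]⟩]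
    linarith [not_le.1 hsum]
end

section
/- Let m ≥ 2 and r ≥ 2 be integers. Let a_1, …, a_r be integers with 0 < a_i < m for every i, set a := ∑_{i=1}^r a_i, and assume gcd(a, m) = 1. Let m' be a positive integer with m'·a ≡ 1 (mod m). Then ∑_{i=1}^r ⌊m'·a_i/m⌋ < ⌊m'·a/m⌋. -/
/-- Let `m ≥ 2`, `r ≥ 2`, integers `a i` with `0 < a i < m`,
`a = ∑ i, a i` with `gcd(a, m) = 1`, and `m' > 0` with `m' * a ≡ 1 (mod m)`.
Then `∑ i, ⌊m' * a i / m⌋ < ⌊m' * a / m⌋`. -/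
theorem sum_floor_div_lt_floor_div
    (m r : ℕ) (hm : 2 ≤ m) (hr : 2 ≤ r)
    (a : Fin r → ℤ) (ha : ∀ i, 0 < a i ∧ a i < (m : ℤ))
    (hgcd : Int.gcd (∑ i, a i) (m : ℤ) = 1)
    (m' : ℤ) (hm' : 0 < m')
    (hmod : m' * (∑ i, a i) ≡ 1 [ZMOD (m : ℤ)]) :
    ∑ i, ⌊((m' : ℚ) * (a i : ℚ)) / (m : ℚ)⌋ <
      ⌊((m' : ℚ) * ((∑ i, a i : ℤ) : ℚ)) / (m : ℚ)⌋ := by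
  have hmZ : (0 : ℤ) < (m : ℤ) := by exact_mod_cast Nat.lt_of_lt_of_le Nat.zero_lt_two hm
  set S : ℤ := ∑ i, a i with hS
  have hfl : ∀ i : Fin r, ⌊((m' : ℚ) * (a i : ℚ)) / (m : ℚ)⌋ = (m' * a i) / (m : ℤ) := by
    intro i
    have := Rat.floor_intCast_div_natCast (m' * a i) m
    simpa [Int.cast_mul] using this
  have hflS : ⌊((m' : ℚ) * (S : ℚ)) / (m : ℚ)⌋ = (m' * S) / (m : ℤ) := by
    have := Rat.floor_intCast_div_natCast (m' * S) m
    simpa [Int.cast_mul] using this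
  rw [hflS]
  simp only [hfl]
  -- remainder of m' * S is 1
  have hmodS : (m' * S) % (m : ℤ) = 1 := by
    have h1 : (m' * S) % (m : ℤ) = 1 % (m : ℤ) := hmod.eq
    rw [h1, Int.emod_eq_of_lt (by norm_num) (by exact_mod_cast hm)]
  -- coprimality of m' and m
  have hcop : IsCoprime ((m : ℤ)) m' := by
    have : m' * S ≡ 1 [ZMOD (m:ℤ)] := hmod
    have hdvd : ((m:ℤ)) ∣ m' * S - 1 := Int.ModEq.dvd this.symm
    obtain ⟨k, hk⟩ := hdvd
    exact ⟨-k, S, by linarith⟩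
  -- each remainder is at least 1
  have hrem : ∀ i : Fin r, 1 ≤ (m' * a i) % (m : ℤ) := by
    intro i
    have h0 : 0 ≤ (m' * a i) % (m : ℤ) := Int.emod_nonneg _ (ne_of_gt hmZ)
    rcases eq_or_lt_of_le h0 with h | h
    · exfalso
      have hdvd : ((m:ℤ)) ∣ m' * a i := Int.dvd_of_emod_eq_zero h.symm
      have : ((m:ℤ)) ∣ a i := (hcop.dvd_of_dvd_mul_left) hdvd
      have h1 := (ha i).1
      have h2 := (ha i).2
      have := Int.le_of_dvd h1 this
      omega
    · omega
  -- key: compare after multiplying by m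
  have hQ : (m' * S) / (m : ℤ) * (m : ℤ) = m' * S - 1 := by
    have := Int.mul_ediv_add_emod (m' * S) (m : ℤ)
    rw [hmodS] at this
    linarith [this]
  have hsum : (∑ i, (m' * a i) / (m : ℤ)) * (m : ℤ)
      = m' * S - ∑ i, (m' * a i) % (m : ℤ) := by
    rw [Finset.sum_mul]
    have : ∀ i : Fin r, (m' * a i) / (m : ℤ) * (m : ℤ) = m' * a i - (m' * a i) % (m : ℤ) := by
      intro i
      have := Int.mul_ediv_add_emod (m' * a i) (m : ℤ)
      linarith [this]
    rw [Finset.sum_congr rfl fun i _ => this i, Finset.sum_sub_distrib, ← Finset.mul_sum, hS]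
  have hRge : (2 : ℤ) ≤ ∑ i, (m' * a i) % (m : ℤ) := by
    calc (2 : ℤ) = ∑ _i : Fin r, (1:ℤ) - (r - 2 : ℤ) := by
          simp only [Finset.sum_const, Finset.card_univ, Fintype.card_fin, nsmul_eq_mul, mul_one]; ring
      _ ≤ ∑ i, (m' * a i) % (m : ℤ) := by
          have h1 : ∑ _i : Fin r, (1:ℤ) ≤ ∑ i, (m' * a i) % (m : ℤ) :=
            Finset.sum_le_sum fun i _ => hrem i
          have h2 : (0:ℤ) ≤ (r : ℤ) - 2 := by exact_mod_cast by omega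
          linarith
  have hlt : (∑ i, (m' * a i) / (m : ℤ)) * (m : ℤ) < (m' * S) / (m : ℤ) * (m : ℤ) := by
    rw [hQ, hsum]; linarith
  exact lt_of_mul_lt_mul_right hlt (le_of_lt hmZ)
end
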